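/- For integers a and b, the graded rings Z[x,y]/(x^2, y(y+ax)) and Z[x,y]/(x^2, y(y+bx)) (with x,y in degree 2) are isomorphic as graded rings if and only if a ≡ b (mod 2). -/

import Mathlib

open MvPolynomial

/-- The integral cohomology ring of the Hirzebruch surface `P(ℂ ⊕ γ^a)`:
`ℤ[x,y]/(x², y(y + a·x))`, where `x = X 0` and `y = X 1` sit in degree 2. -/
noncomputable def hirzebruchRing (a : ℤ) : Type :=
  MvPolynomial (Fin 2) ℤ ⧸
    (Ideal.span {(X 0 : MvPolynomial (Fin 2) ℤ) ^ 2, X 1 * (X 1 + C a * X 0)})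

noncomputable instance (a : ℤ) : CommRing (hirzebruchRing a) :=
  inferInstanceAs (CommRing (MvPolynomial (Fin 2) ℤ ⧸
    (Ideal.span {(X 0 : MvPolynomial (Fin 2) ℤ) ^ 2, X 1 * (X 1 + C a * X 0)})))

/-- The degree-2 part of the Hirzebruch ring: the ℤ-span of the classes of `x` and `y`.
Since the generators sit in degree 2 and the relations are homogeneous, a ring isomorphism
is graded iff it identifies these degree-2 parts. -/
noncomputable def hirzebruchDeg2 (a : ℤ) : Submodule ℤ (hirzebruchRing a) :=
  Submodule.span ℤ
    {Ideal.Quotient.mk _ (X 0 : MvPolynomial (Fin 2) ℤ),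
     Ideal.Quotient.mk _ (X 1 : MvPolynomial (Fin 2) ℤ)}

/-!
If `b = a + 2k`, the substitution `x ↦ x, y ↦ y + kx` sends `y(y + ax)` to
`y(y + bx) + k(a + k)x²`, so it induces a graded isomorphism.
Conversely, a graded isomorphism preserves the property that every square of a degree-2 class
is divisible by 2. Since `(ux + vy)² = (2uv - av²)xy`, this holds for even `a`. For odd `a` it
fails at `y² = -axy`: the functional `p ↦ [xy]p + [y²]p` takes values in `(a + 1)ℤ ⊆ 2ℤ` on
the defining ideal, but is odd on `y² - 2q` for every `q`.
-/

noncomputable def hirzebruchIdeal (a : ℤ) : Ideal (MvPolynomial (Fin 2) ℤ) :=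
  Ideal.span {(X 0 : MvPolynomial (Fin 2) ℤ) ^ 2, X 1 * (X 1 + C a * X 0)}

theorem RingEquiv.forall_two_dvd_mul_self {R S : Type*} [CommRing R] [CommRing S]
    (e : R ≃+* S) {M : Set R} {N : Set S} (hMN : ∀ w ∈ N, e.symm w ∈ M)
    (hM : ∀ z ∈ M, (2 : R) ∣ z * z) :
    ∀ w ∈ N, (2 : S) ∣ w * w := by
  intro w hw
  have h := map_dvd e (hM _ (hMN w hw))
  rwa [map_ofNat, map_mul, e.apply_symm_apply] at h

namespace hirzebruchRing

variable (a : ℤ)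

noncomputable def mk : MvPolynomial (Fin 2) ℤ →+* hirzebruchRing a :=
  Ideal.Quotient.mk (hirzebruchIdeal a)

noncomputable def x : hirzebruchRing a := mk a (X 0)

noncomputable def y : hirzebruchRing a := mk a (X 1)

theorem x_mul_x : x a * x a = 0 := by
  rw [x, ← map_mul, ← pow_two]
  exact Ideal.Quotient.eq_zero_iff_mem.2 (Ideal.subset_span (Set.mem_insert _ _))

theorem y_mul_y_add_mul_x : y a * (y a + a * x a) = 0 := by
  rw [x, y, ← map_intCast (mk a) a, ← eq_intCast C a, ← map_mul, ← map_add, ← map_mul]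
  exact Ideal.Quotient.eq_zero_iff_mem.2 (Ideal.subset_span (Set.mem_insert_of_mem _ rfl))

theorem deg2_eq_span : hirzebruchDeg2 a = Submodule.span ℤ {x a, y a} := rfl

theorem x_mem_deg2 : x a ∈ hirzebruchDeg2 a := Submodule.subset_span (Set.mem_insert _ _)

theorem y_mem_deg2 : y a ∈ hirzebruchDeg2 a :=
  Submodule.subset_span (Set.mem_insert_of_mem _ rfl)

theorem two_dvd_mul_self_of_even (ha : Even a) : ∀ z ∈ hirzebruchDeg2 a, 2 ∣ z * z := by
  intro z hz
  rw [deg2_eq_span, Submodule.mem_span_pair] at hz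
  obtain ⟨u, v, rfl⟩ := hz
  obtain ⟨m, hm⟩ := ha
  have hm' : (a : hirzebruchRing a) = 2 * m := by rw [hm]; push_cast; ring
  refine ⟨(u * v - v * v * m) * (x a * y a), ?_⟩
  simp only [zsmul_eq_mul]
  linear_combination (u : hirzebruchRing a) ^ 2 * x_mul_x a +
    (v : hirzebruchRing a) ^ 2 * y_mul_y_add_mul_x a -
    (v : hirzebruchRing a) ^ 2 * x a * y a * hm'

theorem dvd_coeff_xy_add_coeff_yy {p : MvPolynomial (Fin 2) ℤ} (hp : p ∈ hirzebruchIdeal a) :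
    a + 1 ∣ coeff (Finsupp.single 0 1 + Finsupp.single 1 1) p + coeff (Finsupp.single 1 2) p := by
  obtain ⟨c, d, rfl⟩ := Ideal.mem_span_pair.1 hp
  have hxx : (X 0 : MvPolynomial (Fin 2) ℤ) ^ 2 = monomial (Finsupp.single 0 2) 1 :=
    X_pow_eq_monomial
  have hyy : (X 1 * (X 1 + C a * X 0) : MvPolynomial (Fin 2) ℤ) =
      monomial (Finsupp.single 1 2) 1 + monomial (Finsupp.single 0 1 + Finsupp.single 1 1) a := by
    simp only [X, C_mul_monomial, monomial_mul, mul_add, one_mul, mul_one, ← Finsupp.single_add]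
    rw [add_comm (Finsupp.single 1 1)]
  have hxy : ¬ Finsupp.single 0 1 + Finsupp.single 1 1 ≤ (Finsupp.single 1 2 : Fin 2 →₀ ℕ) :=
    fun h => by simpa using h 0
  rw [hxx, hyy]
  simpa [mul_add, coeff_mul_monomial', hxy] using dvd_mul_left (a + 1) (coeff 0 d)

theorem not_two_dvd_y_mul_y_of_odd (ha : Odd a) : ¬ 2 ∣ y a * y a := by
  rintro ⟨w, hw⟩
  obtain ⟨p, rfl⟩ := Ideal.Quotient.mk_surjective w
  have hmem : X 1 * X 1 - C 2 * p ∈ hirzebruchIdeal a := by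
    rw [← Ideal.Quotient.eq_zero_iff_mem, map_ofNat C 2]
    change mk a _ = 0
    rw [map_sub, map_mul, map_mul, map_ofNat]
    exact sub_eq_zero.2 hw
  have hne : Finsupp.single 1 2 ≠ Finsupp.single 0 1 + (Finsupp.single 1 1 : Fin 2 →₀ ℕ) :=
    fun h => by simpa using DFunLike.congr_fun h 0
  have h := dvd_coeff_xy_add_coeff_yy a hmem
  simp only [X, monomial_mul, one_mul, ← Finsupp.single_add] at h
  simp only [coeff_sub, coeff_C_mul, coeff_monomial, hne, if_false, if_true] at h
  have := ha.add_one.two_dvd.trans h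
  omega

theorem forall_two_dvd_mul_self_iff : (∀ z ∈ hirzebruchDeg2 a, 2 ∣ z * z) ↔ Even a := by
  refine ⟨fun h => ?_, two_dvd_mul_self_of_even a⟩
  by_contra ha
  exact not_two_dvd_y_mul_y_of_odd a (Int.not_even_iff_odd.1 ha) (h _ (y_mem_deg2 a))

theorem map_mem_deg2 {b : ℤ} {F : Type*} [FunLike F (hirzebruchRing a) (hirzebruchRing b)]
    [RingHomClass F (hirzebruchRing a) (hirzebruchRing b)] (f : F)
    (hx : f (x a) ∈ hirzebruchDeg2 b) (hy : f (y a) ∈ hirzebruchDeg2 b) :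
    ∀ z ∈ hirzebruchDeg2 a, f z ∈ hirzebruchDeg2 b := by
  intro z hz
  rw [deg2_eq_span, Submodule.mem_span_pair] at hz
  obtain ⟨u, v, rfl⟩ := hz
  rw [map_add, map_zsmul, map_zsmul]
  exact add_mem (Submodule.smul_mem _ u hx) (Submodule.smul_mem _ v hy)

noncomputable def shearHom (k : ℤ) : MvPolynomial (Fin 2) ℤ →ₐ[ℤ] MvPolynomial (Fin 2) ℤ :=
  aeval ![X 0, X 1 + C k * X 0]

theorem shearHom_comp_shearHom_neg (k : ℤ) :
    (shearHom k).comp (shearHom (-k)) = AlgHom.id ℤ _ := by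
  ext i
  fin_cases i <;> simp [shearHom]

noncomputable def shear (k : ℤ) : MvPolynomial (Fin 2) ℤ ≃ₐ[ℤ] MvPolynomial (Fin 2) ℤ :=
  AlgEquiv.ofAlgHom (shearHom k) (shearHom (-k)) (shearHom_comp_shearHom_neg k)
    (by simpa using shearHom_comp_shearHom_neg (-k))

theorem shear_X_zero (k : ℤ) : shear k (X 0) = X 0 := by
  simp [shear, shearHom]

theorem shear_X_one (k : ℤ) : shear k (X 1) = X 1 + C k * X 0 := by
  simp [shear, shearHom]

theorem map_shear_hirzebruchIdeal (k : ℤ) :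
    (hirzebruchIdeal a).map (shear k) = hirzebruchIdeal (a + 2 * k) := by
  have hrel : shear k (X 1 * (X 1 + C a * X 0)) =
      X 1 * (X 1 + C (a + 2 * k) * X 0) + C (k * (a + k)) * X 0 ^ 2 := by
    have hC : shear k (C a) = C a := (shear k).commutes a
    rw [map_mul, map_add, map_mul, hC, shear_X_zero, shear_X_one]
    simp only [map_add, map_mul, map_ofNat]
    ring
  rw [hirzebruchIdeal, Ideal.map_span, Set.image_pair, hrel, map_pow, shear_X_zero,
    Ideal.span_pair_add_mul_left, hirzebruchIdeal]

noncomputable def shearEquiv (k : ℤ) : hirzebruchRing a ≃+* hirzebruchRing (a + 2 * k) :=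
  Ideal.quotientEquiv _ _ (shear k).toRingEquiv (map_shear_hirzebruchIdeal a k).symm

theorem mk_shear_X_mem_deg2 (k : ℤ) (i : Fin 2) :
    mk a (shear k (X i)) ∈ hirzebruchDeg2 a := by
  fin_cases i
  · simpa [shear_X_zero, x] using x_mem_deg2 a
  · simpa [shear_X_one, x, y, ← zsmul_eq_mul] using
      add_mem (y_mem_deg2 a) (Submodule.smul_mem _ k (x_mem_deg2 a))

theorem exists_shearEquiv_graded (k : ℤ) :
    ∃ e : hirzebruchRing a ≃+* hirzebruchRing (a + 2 * k),
      (∀ z ∈ hirzebruchDeg2 a, e z ∈ hirzebruchDeg2 (a + 2 * k)) ∧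
      (∀ w ∈ hirzebruchDeg2 (a + 2 * k), e.symm w ∈ hirzebruchDeg2 a) :=
  ⟨shearEquiv a k,
    map_mem_deg2 a _ (mk_shear_X_mem_deg2 _ k 0) (mk_shear_X_mem_deg2 _ k 1),
    map_mem_deg2 _ _ (mk_shear_X_mem_deg2 a (-k) 0) (mk_shear_X_mem_deg2 a (-k) 1)⟩

end hirzebruchRing

/-- The graded rings `ℤ[x,y]/(x², y(y+ax))` and `ℤ[x,y]/(x², y(y+bx))` (with `x, y` in
degree 2) are isomorphic as graded rings if and only if `a ≡ b (mod 2)`. -/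
theorem hirzebruch_cohomology_iso_iff_mod_two (a b : ℤ) :
    (∃ e : hirzebruchRing a ≃+* hirzebruchRing b,
      (∀ z ∈ hirzebruchDeg2 a, e z ∈ hirzebruchDeg2 b) ∧
      (∀ w ∈ hirzebruchDeg2 b, e.symm w ∈ hirzebruchDeg2 a)) ↔ a ≡ b [ZMOD 2] := by
  constructor
  · rintro ⟨e, he, he_symm⟩
    have hab : Even a ↔ Even b := by
      rw [← hirzebruchRing.forall_two_dvd_mul_self_iff,
        ← hirzebruchRing.forall_two_dvd_mul_self_iff]
      exact ⟨e.forall_two_dvd_mul_self he_symm, e.symm.forall_two_dvd_mul_self he⟩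
    rw [Int.modEq_iff_dvd, ← even_iff_two_dvd, Int.even_sub]
    exact hab.symm
  · intro h
    obtain ⟨k, hk⟩ := h.dvd
    obtain rfl : b = a + 2 * k := by omega
    exact hirzebruchRing.exists_shearEquiv_graded a k
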